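/- There exists an absolute constant c > 0 with the following property. Let p be a prime, ζ, ε ∈ (0,1], A, B, C ⊆ F_p sets with |A|, |B|, |C| > ζ·√p, and χ a nontrivial multiplicative character modulo p. If |∑_{a∈A, b∈B, c∈C} χ(a+b+c)| ≥ ε·|A|·|B|·|C|, then the additive energy satisfies E⁺(A) ≥ c·(ε·ζ)⁴·|A|³. -/

import Mathlib

/-!
Write `S = ∑_{c ∈ C} g(c)` with `g(c) = ∑_{a ∈ A, b ∈ B} χ(a + b + c)`. By Cauchy–Schwarz and
extending the sum over `c` to all of `F_p`, `|S|² ≤ |C| ∑_c |g(c)|²`, and orthogonality of the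
shifts of `χ` (a Jacobi sum `J(χ, χ̄) = -χ(-1)`) gives `∑_c |g(c)|² = p E⁺(A, B) - |A|²|B|²`.
Counting differences, `E⁺(A, B)² ≤ E⁺(A) |B|³`. Hence `ε⁴ |A|⁴ |B| |C|² ≤ p² E⁺(A)`, and the
size assumptions give `|A| |B| |C|² > ζ⁴ p²`, so one may take `c = 1`.
-/

open Finset
open scoped Combinatorics.Additive

namespace Finset

lemma card_filter_product_eq_sum_mul {β γ M : Type*} [Fintype M] [DecidableEq M]
    (s : Finset β) (t : Finset γ) (f : β → M) (g : γ → M) :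
    #{x ∈ s ×ˢ t | f x.1 = g x.2} = ∑ d, #{y ∈ s | f y = d} * #{z ∈ t | g z = d} := by
  rw [card_eq_sum_card_fiberwise (f := fun x => f x.1) (t := univ)
    fun _ _ => mem_coe.2 (mem_univ _)]
  refine sum_congr rfl fun d _ => ?_
  rw [filter_filter, ← card_product, ← filter_product]
  congr 1
  exact filter_congr fun x _ => ⟨fun h => ⟨h.2, h.1 ▸ h.2⟩, fun h => ⟨h.1.trans h.2.symm, h.1⟩⟩

variable {α : Type*} [AddCommGroup α] [DecidableEq α]

def diffRepr (s : Finset α) (d : α) : ℕ := #{x ∈ s ×ˢ s | x.1 - x.2 = d}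

lemma diffRepr_le_card (s : Finset α) (d : α) : s.diffRepr d ≤ #s := by
  refine card_le_card_of_injOn Prod.fst (fun x hx => (mem_product.1 (mem_filter.1 hx).1).1) ?_
  intro x hx y hy hxy
  have hx := (mem_filter.1 hx).2
  have hy := (mem_filter.1 hy).2
  exact Prod.ext hxy (by rw [← sub_right_inj (a := x.1), hx, hxy, hy])

variable [Fintype α]

lemma sum_diffRepr (s : Finset α) : ∑ d, s.diffRepr d = #s ^ 2 := by
  rw [sq, ← card_product]
  exact (card_eq_sum_card_fiberwise fun _ _ => mem_coe.2 (mem_univ _)).symm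

lemma sum_diffRepr_sq_le (s : Finset α) : ∑ d, s.diffRepr d ^ 2 ≤ #s ^ 3 :=
  calc ∑ d, s.diffRepr d ^ 2 ≤ ∑ d, #s * s.diffRepr d := by
        gcongr with d
        rw [sq]
        exact Nat.mul_le_mul_right _ (diffRepr_le_card s d)
    _ = #s ^ 3 := by rw [← mul_sum, sum_diffRepr]; ring

lemma addEnergy_eq_sum_diffRepr_mul (s t : Finset α) :
    E[s, t] = ∑ d, s.diffRepr d * t.diffRepr d := by
  have hswap (d : α) : #{z ∈ t ×ˢ t | z.2 - z.1 = d} = t.diffRepr d := by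
    rw [diffRepr, ← card_map (Equiv.prodComm α α).toEmbedding, map_filter]
    simp [map_eq_image]
  simp_rw [← hswap, diffRepr]
  rw [← card_filter_product_eq_sum_mul, addEnergy]
  congr 1
  exact filter_congr fun x _ => by rw [sub_eq_sub_iff_add_eq_add, add_comm x.1.2]

lemma addEnergy_self_eq_sum_diffRepr_sq (s : Finset α) : E[s] = ∑ d, s.diffRepr d ^ 2 := by
  simp_rw [sq, addEnergy_eq_sum_diffRepr_mul]

lemma addEnergy_sq_le (s t : Finset α) : E[s, t] ^ 2 ≤ E[s] * #t ^ 3 :=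
  calc E[s, t] ^ 2 ≤ (∑ d, s.diffRepr d ^ 2) * ∑ d, t.diffRepr d ^ 2 := by
        rw [addEnergy_eq_sum_diffRepr_mul]
        exact sum_mul_sq_le_sq_mul_sq _ _ _
    _ ≤ E[s] * #t ^ 3 := by
        rw [addEnergy_self_eq_sum_diffRepr_sq]
        exact Nat.mul_le_mul_left _ (sum_diffRepr_sq_le t)

end Finset

namespace MulChar

lemma inv_apply_mul_apply_of_isUnit {M R : Type*} [CommMonoid M] [CommMonoidWithZero R]
    (χ : MulChar M R) {a : M} (ha : IsUnit a) : χ⁻¹ a * χ a = 1 := by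
  rw [← mul_apply, inv_mul_cancel, one_apply ha]

variable {F : Type*} [Field F] [Fintype F] [DecidableEq F]

lemma sum_apply_add_mul_inv_apply_add {R : Type*} [CommRing R] [IsDomain R] {χ : MulChar F R}
    (hχ : χ ≠ 1) (x y : F) :
    ∑ c, χ (x + c) * χ⁻¹ (y + c) = if x = y then (Fintype.card F : R) - 1 else -1 := by
  split_ifs with hxy
  · subst hxy
    calc ∑ c, χ (x + c) * χ⁻¹ (x + c) = ∑ c, (1 : MulChar F R) (x + c) := by
          simp_rw [← mul_apply, mul_inv_cancel]
      _ = ∑ u, (1 : MulChar F R) u := Fintype.sum_equiv (Equiv.addLeft x) _ _ fun _ => rfl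
      _ = (Fintype.card F : R) - 1 := by
          rw [sum_one_eq_card_units, Fintype.card_units, Nat.cast_sub Fintype.card_pos,
            Nat.cast_one]
  · have hd : IsUnit (x - y) := (sub_ne_zero.mpr hxy).isUnit
    -- the affine substitution `c = (x - y) t - x` turns the sum into a Jacobi sum
    calc ∑ c, χ (x + c) * χ⁻¹ (y + c)
        = ∑ t, χ (x + ((x - y) * t - x)) * χ⁻¹ (y + ((x - y) * t - x)) :=
          (Fintype.sum_equiv ((Equiv.mulLeft₀ (x - y) hd.ne_zero).trans (Equiv.subRight x))
            _ _ fun _ => rfl).symm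
      _ = ∑ t, χ⁻¹ (-1) * (χ t * χ⁻¹ (1 - t)) := by
          refine sum_congr rfl fun t _ => ?_
          rw [show x + ((x - y) * t - x) = (x - y) * t by ring,
            show y + ((x - y) * t - x) = -1 * ((x - y) * (1 - t)) by ring, map_mul, map_mul,
            map_mul]
          linear_combination (χ⁻¹ (-1) * χ t * χ⁻¹ (1 - t)) * inv_apply_mul_apply_of_isUnit χ hd
      _ = -1 := by
          rw [← mul_sum, ← jacobiSum, jacobiSum_nontrivial_inv hχ, mul_neg,
            inv_apply_mul_apply_of_isUnit χ isUnit_one.neg]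

lemma sum_norm_sum_apply_add_sq {ι : Type*} {χ : MulChar F ℂ} (hχ : χ ≠ 1) (s : Finset ι)
    (f : ι → F) :
    ∑ c, ‖∑ i ∈ s, χ (f i + c)‖ ^ 2 =
      Fintype.card F * #{x ∈ s ×ˢ s | f x.1 = f x.2} - #s ^ 2 := by
  apply Complex.ofReal_injective
  push_cast
  calc ∑ c, (‖∑ i ∈ s, χ (f i + c)‖ : ℂ) ^ 2
      = ∑ c, ∑ x ∈ s ×ˢ s, χ (f x.1 + c) * χ⁻¹ (f x.2 + c) := by
        refine sum_congr rfl fun c _ => ?_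
        rw [← Complex.mul_conj', map_sum, sum_mul_sum, sum_product]
        simp only [← Complex.star_def, star_apply']
    _ = ∑ x ∈ s ×ˢ s, if f x.1 = f x.2 then (Fintype.card F : ℂ) - 1 else -1 := by
        rw [sum_comm]
        exact sum_congr rfl fun x _ => sum_apply_add_mul_inv_apply_add hχ _ _
    _ = Fintype.card F * #{x ∈ s ×ˢ s | f x.1 = f x.2} - #s ^ 2 := by
        have hcard : (#{x ∈ s ×ˢ s | f x.1 = f x.2} : ℂ) + #{x ∈ s ×ˢ s | ¬f x.1 = f x.2} =
            #s ^ 2 := by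
          rw [← Nat.cast_add, card_filter_add_card_filter_not, card_product, sq, Nat.cast_mul]
        rw [sum_ite, sum_const, sum_const, nsmul_eq_mul, nsmul_eq_mul]
        linear_combination -hcard

lemma norm_sum_sum_sum_apply_add_add_sq_le {χ : MulChar F ℂ} (hχ : χ ≠ 1) (A B C : Finset F) :
    ‖∑ a ∈ A, ∑ b ∈ B, ∑ c ∈ C, χ (a + b + c)‖ ^ 2 ≤ #C * (Fintype.card F * E[A, B]) := by
  set g : F → ℂ := fun c => ∑ x ∈ A ×ˢ B, χ (x.1 + x.2 + c)
  have hS : ∑ a ∈ A, ∑ b ∈ B, ∑ c ∈ C, χ (a + b + c) = ∑ c ∈ C, g c := by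
    rw [← sum_product' A B fun a b => ∑ c ∈ C, χ (a + b + c), sum_comm]
  calc ‖∑ a ∈ A, ∑ b ∈ B, ∑ c ∈ C, χ (a + b + c)‖ ^ 2 ≤ (∑ c ∈ C, ‖g c‖) ^ 2 := by
        rw [hS]
        exact pow_le_pow_left₀ (norm_nonneg _) (norm_sum_le _ _) 2
    _ ≤ #C * ∑ c ∈ C, ‖g c‖ ^ 2 := sq_sum_le_card_mul_sum_sq
    _ ≤ #C * ∑ c, ‖g c‖ ^ 2 := by
        gcongr
        exact subset_univ C
    _ = #C * (Fintype.card F * E[A, B] - #(A ×ˢ B) ^ 2) := by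
        rw [sum_norm_sum_apply_add_sq hχ (A ×ˢ B) fun x => x.1 + x.2, addEnergy_eq_card_filter]
    _ ≤ #C * (Fintype.card F * E[A, B]) := by
        gcongr
        exact sub_le_self _ (by positivity)

lemma norm_sum_sum_sum_apply_add_add_pow_four_le {χ : MulChar F ℂ} (hχ : χ ≠ 1)
    (A B C : Finset F) :
    ‖∑ a ∈ A, ∑ b ∈ B, ∑ c ∈ C, χ (a + b + c)‖ ^ 4 ≤
      (Fintype.card F : ℝ) ^ 2 * #B ^ 3 * #C ^ 2 * E[A] := by
  have hAB : (E[A, B] : ℝ) ^ 2 ≤ E[A] * #B ^ 3 := by exact_mod_cast addEnergy_sq_le A B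
  calc ‖∑ a ∈ A, ∑ b ∈ B, ∑ c ∈ C, χ (a + b + c)‖ ^ 4
      = (‖∑ a ∈ A, ∑ b ∈ B, ∑ c ∈ C, χ (a + b + c)‖ ^ 2) ^ 2 := by ring
    _ ≤ ((#C : ℝ) * (Fintype.card F * E[A, B])) ^ 2 := by
        gcongr
        exact norm_sum_sum_sum_apply_add_add_sq_le hχ A B C
    _ = (Fintype.card F : ℝ) ^ 2 * #C ^ 2 * E[A, B] ^ 2 := by ring
    _ ≤ (Fintype.card F : ℝ) ^ 2 * #C ^ 2 * (E[A] * #B ^ 3) := by gcongr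
    _ = (Fintype.card F : ℝ) ^ 2 * #B ^ 3 * #C ^ 2 * E[A] := by ring

end MulChar

/-- A large ternary character sum forces large additive energy `E⁺(A)`. -/
theorem stmt_14 :
    ∃ c : ℝ, 0 < c ∧
      ∀ (p : ℕ), p.Prime →
        ∀ (ζ ε : ℝ), ζ ∈ Set.Ioc (0 : ℝ) 1 → ε ∈ Set.Ioc (0 : ℝ) 1 →
          ∀ A B C : Finset (ZMod p),
            (A.card : ℝ) > ζ * Real.sqrt p →
            (B.card : ℝ) > ζ * Real.sqrt p →
            (C.card : ℝ) > ζ * Real.sqrt p →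
            ∀ χ : MulChar (ZMod p) ℂ, χ ≠ 1 →
              ‖∑ a ∈ A, ∑ b ∈ B, ∑ c' ∈ C, χ (a + b + c')‖ ≥
                ε * A.card * B.card * C.card →
              ((((A ×ˢ A) ×ˢ (A ×ˢ A)).filter
                  (fun x => x.1.1 + x.1.2 = x.2.1 + x.2.2)).card : ℝ) ≥
                c * (ε * ζ) ^ 4 * (A.card : ℝ) ^ 3 := by
  refine ⟨1, one_pos, fun p hp ζ ε ⟨hζ, _⟩ ⟨hε, _⟩ A B C hA hB hC χ hχ hS => ?_⟩
  have : Fact p.Prime := ⟨hp⟩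
  rw [← addEnergy_eq_card_filter, ge_iff_le, one_mul]
  have hp0 : (0 : ℝ) < p := by exact_mod_cast hp.pos
  have hζp : 0 ≤ ζ * Real.sqrt p := by positivity
  have hsize : ζ ^ 4 * (p : ℝ) ^ 2 ≤ #A * #B * #C ^ 2 :=
    calc ζ ^ 4 * (p : ℝ) ^ 2
        = (ζ * Real.sqrt p) * (ζ * Real.sqrt p) * (ζ * Real.sqrt p) * (ζ * Real.sqrt p) := by
          conv_lhs => rw [← Real.sq_sqrt hp0.le]
          ring
      _ ≤ #A * #B * #C * #C := by gcongr
      _ = #A * #B * #C ^ 2 := by ring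
  have hsum : (ε * #A * #B * #C) ^ 4 ≤ (p : ℝ) ^ 2 * #B ^ 3 * #C ^ 2 * E[A] := by
    have := MulChar.norm_sum_sum_sum_apply_add_add_pow_four_le hχ A B C
    rw [ZMod.card] at this
    exact (pow_le_pow_left₀ (by positivity) hS 4).trans this
  have hBC : (0 : ℝ) < (p : ℝ) ^ 2 * #B ^ 3 * #C ^ 2 := by
    have : (0 : ℝ) < #B := hζp.trans_lt hB
    have : (0 : ℝ) < #C := hζp.trans_lt hC
    positivity
  refine le_of_mul_le_mul_left ?_ hBC
  calc (p : ℝ) ^ 2 * #B ^ 3 * #C ^ 2 * ((ε * ζ) ^ 4 * #A ^ 3)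
      = ε ^ 4 * #A ^ 3 * #B ^ 3 * #C ^ 2 * (ζ ^ 4 * p ^ 2) := by ring
    _ ≤ ε ^ 4 * #A ^ 3 * #B ^ 3 * #C ^ 2 * (#A * #B * #C ^ 2) := by gcongr
    _ = (ε * #A * #B * #C) ^ 4 := by ring
    _ ≤ (p : ℝ) ^ 2 * #B ^ 3 * #C ^ 2 * E[A] := hsum
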